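/- Plotkin-type bound, case E < 2C: let X ⊆ F_2^{Cm×n} be a code whose transformed codebook has minimum transform distance d with respect to T̂. If d > Emn/2, then |X| ≤ 2d / (2d − Emn). -/

import Mathlib

/-! Pick for every column of `T X` a preimage under `T̂`; the transform distance of two codewords
is then at most the Hamming distance of their preimage matrices, which have `Emn` binary entries.
Summed over ordered pairs of codewords, the distance total is at least `M(M-1)d`. Coordinatewise,
a coordinate carrying `s` ones among the `M` words contributes `2s(M-s) ≤ M²/2`, so the total is
at most `EmnM²/2`, and comparing the two bounds gives `M ≤ 2d/(2d - Emn)`. -/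

open Matrix Finset

noncomputable def colDelta {a c : ℕ} (B : Matrix (Fin a) (Fin c) (ZMod 2))
    (u v : Fin a → ZMod 2) : ℕ :=
  sInf {k | ∃ s : Finset (Fin c), s.card = k ∧ u + ∑ j ∈ s, Bᵀ j = v}

noncomputable def transDist {a b c : ℕ} (B : Matrix (Fin a) (Fin c) (ZMod 2))
    (M1 M2 : Matrix (Fin a) (Fin b) (ZMod 2)) : ℕ :=
  ∑ i : Fin b, colDelta B (fun r => M1 r i) (fun r => M2 r i)

lemma colDelta_le_hammingNorm {a c : ℕ} (B : Matrix (Fin a) (Fin c) (ZMod 2))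
    {u v : Fin a → ZMod 2} (z : Fin c → ZMod 2) (h : u + B *ᵥ z = v) :
    colDelta B u v ≤ hammingNorm z := by
  -- over `𝔽₂`, `B *ᵥ z` is the sum of the columns of `B` indexed by the support of `z`
  refine Nat.sInf_le ⟨({j | z j ≠ 0} : Finset (Fin c)), rfl, ?_⟩
  rw [← h]
  change u + ∑ j with z j ≠ 0, (fun i => B i j) = u + B *ᵥ z
  congr 1
  ext r
  simp only [Finset.sum_apply, sum_filter, mulVec, dotProduct]
  refine sum_congr rfl fun j _ => ?_
  rcases (by decide : ∀ t : ZMod 2, t = 0 ∨ t = 1) (z j) with hj | hj <;> simp [hj]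

lemma colDelta_mulVec_le_hammingDist {a c : ℕ} (B : Matrix (Fin a) (Fin c) (ZMod 2))
    (x y : Fin c → ZMod 2) : colDelta B (B *ᵥ x) (B *ᵥ y) ≤ hammingDist x y := by
  rw [hammingDist_eq_hammingNorm]
  exact colDelta_le_hammingNorm B _ (by rw [mulVec_add, mulVec_neg, add_neg_cancel_left])

lemma transDist_mul_le {a b c : ℕ} (B : Matrix (Fin a) (Fin c) (ZMod 2))
    (V₁ V₂ : Matrix (Fin c) (Fin b) (ZMod 2)) :
    transDist B (B * V₁) (B * V₂) ≤ ∑ i, hammingDist (fun l => V₁ l i) (fun l => V₂ l i) :=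
  sum_le_sum fun _ _ => colDelta_mulVec_le_hammingDist B _ _

lemma ZMod.ite_ne_eq_val_add_val_sub_two_mul (a b : ZMod 2) :
    (if a ≠ b then 1 else 0 : ℤ) = a.val + b.val - 2 * a.val * b.val := by
  fin_cases a <;> fin_cases b <;> rfl

section Plotkin

variable {α ι κ : Type*}

lemma card_mul_card_sub_one_mul_le_sum_sum (s : Finset α) (D : α → α → ℕ) {d : ℕ}
    (h : ∀ x ∈ s, ∀ y ∈ s, x ≠ y → d ≤ D x y) :
    #s * (#s - 1) * d ≤ ∑ x ∈ s, ∑ y ∈ s, D x y :=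
  calc #s * (#s - 1) * d = ∑ _p ∈ s.offDiag, d := by
        rw [sum_const, offDiag_card, smul_eq_mul, Nat.mul_sub_one]
    _ ≤ ∑ p ∈ s.offDiag, D p.1 p.2 := sum_le_sum fun p hp => by
        obtain ⟨hx, hy, hne⟩ := mem_offDiag.1 hp
        exact h _ hx _ hy hne
    _ ≤ ∑ p ∈ s ×ˢ s, D p.1 p.2 :=
        sum_le_sum_of_subset fun p hp => by
          obtain ⟨hx, hy, -⟩ := mem_offDiag.1 hp
          exact mem_product.2 ⟨hx, hy⟩
    _ = ∑ x ∈ s, ∑ y ∈ s, D x y := sum_product s s _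

lemma two_mul_sum_sum_ite_ne_le_sq (s : Finset α) (f : α → ZMod 2) :
    2 * ∑ x ∈ s, ∑ y ∈ s, (if f x ≠ f y then 1 else 0) ≤ #s ^ 2 := by
  set S : ℤ := ∑ x ∈ s, ((f x).val : ℤ)
  have hsum : ((∑ x ∈ s, ∑ y ∈ s, (if f x ≠ f y then 1 else 0) : ℕ) : ℤ) =
      2 * #s * S - 2 * S ^ 2 := by
    simp only [Nat.cast_sum, Nat.cast_ite, Nat.cast_one, Nat.cast_zero,
      ZMod.ite_ne_eq_val_add_val_sub_two_mul, sum_sub_distrib, sum_add_distrib, sum_const,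
      nsmul_eq_mul, ← mul_sum, ← sum_mul, S]
    ring
  suffices h : 2 * ((∑ x ∈ s, ∑ y ∈ s, (if f x ≠ f y then 1 else 0) : ℕ) : ℤ) ≤ (#s : ℤ) ^ 2 by
    exact_mod_cast h
  rw [hsum]
  nlinarith [sq_nonneg ((#s : ℤ) - 2 * S)]

lemma two_mul_sum_sum_hammingDist_le [Fintype ι] (s : Finset α) (w : α → ι → ZMod 2) :
    2 * ∑ x ∈ s, ∑ y ∈ s, hammingDist (w x) (w y) ≤ Fintype.card ι * #s ^ 2 := by
  calc 2 * ∑ x ∈ s, ∑ y ∈ s, hammingDist (w x) (w y)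
      = ∑ i, 2 * ∑ x ∈ s, ∑ y ∈ s, (if w x i ≠ w y i then 1 else 0) := by
        simp only [hammingDist, card_filter, mul_sum]
        simp_rw [sum_comm (s := s) (t := univ)]
    _ ≤ ∑ _i : ι, #s ^ 2 := sum_le_sum fun i _ => two_mul_sum_sum_ite_ne_le_sq s (w · i)
    _ = Fintype.card ι * #s ^ 2 := by simp

lemma two_mul_sum_sum_sum_hammingDist_le [Fintype ι] [Fintype κ] (s : Finset α)
    (w : α → κ → ι → ZMod 2) :
    2 * ∑ x ∈ s, ∑ y ∈ s, ∑ k, hammingDist (w x k) (w y k) ≤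
      Fintype.card κ * Fintype.card ι * #s ^ 2 :=
  calc 2 * ∑ x ∈ s, ∑ y ∈ s, ∑ k, hammingDist (w x k) (w y k)
      = ∑ k, 2 * ∑ x ∈ s, ∑ y ∈ s, hammingDist (w x k) (w y k) := by
        simp only [mul_sum]
        simp_rw [sum_comm (s := s) (t := univ)]
    _ ≤ ∑ _k : κ, Fintype.card ι * #s ^ 2 :=
        sum_le_sum fun k _ => two_mul_sum_sum_hammingDist_le s (w · k)
    _ = Fintype.card κ * Fintype.card ι * #s ^ 2 := by simp [mul_assoc]

end Plotkin

lemma cast_le_div_of_two_mul_mul_le {M d N : ℕ} (h : 2 * (M * (M - 1) * d) ≤ N * M ^ 2)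
    (hd : (N : ℝ) < 2 * d) : (M : ℝ) ≤ 2 * d / (2 * d - N) := by
  rw [le_div_iff₀ (by linarith)]
  rcases Nat.eq_zero_or_pos M with rfl | hM
  · simp
  have h' : 2 * (M - 1) * d ≤ N * M := by
    refine le_of_mul_le_mul_right ?_ hM
    calc 2 * (M - 1) * d * M = 2 * (M * (M - 1) * d) := by ring
      _ ≤ N * M ^ 2 := h
      _ = N * M * M := by ring
  have h'' : 2 * ((M : ℝ) - 1) * d ≤ N * M := by
    have := (Nat.cast_le (α := ℝ)).2 h'
    push_cast [Nat.cast_sub (Nat.one_le_iff_ne_zero.2 hM.ne')] at this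
    exact this
  linarith

theorem plotkin_type_small_E_general {C E m n d : ℕ}
    (That : Matrix (Fin (C * m)) (Fin (E * m)) (ZMod 2))
    (T : Matrix (Fin (C * m)) (Fin (C * m)) (ZMod 2))
    (hcol : ∀ v : Fin (C * m) → ZMod 2, ∃ z : Fin (E * m) → ZMod 2,
      That.mulVec z = v ∧ hammingNorm z ≤ C * m)
    (𝒞 : Finset (Matrix (Fin (C * m)) (Fin n) (ZMod 2)))
    (hdist : ∀ X1 ∈ 𝒞, ∀ X2 ∈ 𝒞, X1 ≠ X2 → d ≤ transDist That (T * X1) (T * X2))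
    (hd : (E * m * n : ℝ) / 2 < d) :
    (𝒞.card : ℝ) ≤ 2 * d / (2 * (d : ℝ) - E * m * n) := by
  choose Z hZ using hcol
  let V (X : Matrix (Fin (C * m)) (Fin n) (ZMod 2)) : Matrix (Fin (E * m)) (Fin n) (ZMod 2) :=
    .of fun l i => Z (fun r => (T * X) r i) l
  have hV (X) : That * V X = T * X := by
    ext r i
    exact congrFun (hZ _).1 r
  let D X₁ X₂ := ∑ i, hammingDist (fun l => V X₁ l i) (fun l => V X₂ l i)
  have hlower : #𝒞 * (#𝒞 - 1) * d ≤ ∑ X₁ ∈ 𝒞, ∑ X₂ ∈ 𝒞, D X₁ X₂ :=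
    card_mul_card_sub_one_mul_le_sum_sum 𝒞 D fun X₁ h₁ X₂ h₂ hne =>
      (hdist X₁ h₁ X₂ h₂ hne).trans (hV X₁ ▸ hV X₂ ▸ transDist_mul_le That (V X₁) (V X₂))
  have hupper : 2 * ∑ X₁ ∈ 𝒞, ∑ X₂ ∈ 𝒞, D X₁ X₂ ≤ n * (E * m) * #𝒞 ^ 2 := by
    simpa using two_mul_sum_sum_sum_hammingDist_le 𝒞 fun X i l => V X l i
  have hN : ((n * (E * m) : ℕ) : ℝ) = E * m * n := by push_cast; ring
  rw [← hN] at hd ⊢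
  exact cast_le_div_of_two_mul_mul_le ((Nat.mul_le_mul_left 2 hlower).trans hupper)
    (by linarith)

/-- Plotkin-type bound, case `E < 2C`: if the transformed codebook `T𝒞` has minimum
transform distance `d > Emn/2` w.r.t. `T̂`, then `|𝒞| ≤ 2d/(2d - Emn)`.
The hypothesis `hcol` records that every column vector is expressible as `T̂V`
with `wt(V) ≤ Cm`. -/
theorem plotkin_type_small_E {C E m n d : ℕ} (hC : 0 < C) (hE : E < 2 * C)
    (That : Matrix (Fin (C * m)) (Fin (E * m)) (ZMod 2))
    (T : Matrix (Fin (C * m)) (Fin (C * m)) (ZMod 2))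
    (hcol : ∀ v : Fin (C * m) → ZMod 2, ∃ z : Fin (E * m) → ZMod 2,
      That.mulVec z = v ∧ hammingNorm z ≤ C * m)
    (𝒞 : Finset (Matrix (Fin (C * m)) (Fin n) (ZMod 2)))
    (hdist : ∀ X1 ∈ 𝒞, ∀ X2 ∈ 𝒞, X1 ≠ X2 → d ≤ transDist That (T * X1) (T * X2))
    (hd : (E * m * n : ℝ) / 2 < d) :
    (𝒞.card : ℝ) ≤ 2 * d / (2 * (d : ℝ) - E * m * n) :=
  plotkin_type_small_E_general That T hcol 𝒞 hdist hd
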